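/- Let n ≥ 1 be an integer and let a, b ∈ ZMod n satisfy 2a ≠ 0, 2b ≠ 0, b ≠ a and b ≠ −a. Then the only 2-dimensional ℝ-subspaces X of ℝ⁴ that are invariant under W(a,b) (i.e., satisfy W(a,b)·x ∈ X for all x ∈ X) are the coordinate plane spanned by the first two standard basis vectors and the coordinate plane spanned by the last two standard basis vectors. -/
import Mathlib

/-- The 2×2 rotation matrix through angle `2πa/n`, for `a : ZMod n`. -/
noncomputable def rotMat (n : ℕ) (a : ZMod n) : Matrix (Fin 2) (Fin 2) ℝ :=
  !![Real.cos (2 * Real.pi * a.val / n), -Real.sin (2 * Real.pi * a.val / n);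
     Real.sin (2 * Real.pi * a.val / n),  Real.cos (2 * Real.pi * a.val / n)]

/-- The 4×4 block-diagonal matrix with blocks `rotMat n a` and `rotMat n b`. -/
noncomputable def Wmat (n : ℕ) (a b : ZMod n) : Matrix (Fin 4) (Fin 4) ℝ :=
  Matrix.reindex finSumFinEquiv finSumFinEquiv
    (Matrix.fromBlocks (rotMat n a) 0 0 (rotMat n b))

/-! ### Auxiliary number-theoretic lemmas -/

lemma zmod_sin_ne (n : ℕ) (hn : 1 ≤ n) (a : ZMod n) (ha : 2 * a ≠ 0) :
    Real.sin (2 * Real.pi * (a.val : ℝ) / n) ≠ 0 := by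
  haveI : NeZero n := ⟨by omega⟩
  intro h
  rw [Real.sin_eq_zero_iff] at h
  obtain ⟨k, hk⟩ := h
  have hn0 : (n : ℝ) ≠ 0 := by positivity
  rw [eq_div_iff hn0] at hk
  have hkn : (k : ℝ) * n = 2 * a.val := by
    apply mul_left_cancel₀ Real.pi_ne_zero
    linear_combination hk
  have hkz : k * n = 2 * (a.val : ℤ) := by exact_mod_cast hkn
  have hdvd : (n : ℤ) ∣ 2 * (a.val : ℤ) := ⟨k, by linarith⟩
  have h0 := (ZMod.intCast_zmod_eq_zero_iff_dvd (2 * (a.val : ℤ)) n).2 hdvd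
  push_cast [ZMod.natCast_val, ZMod.cast_id] at h0
  exact ha h0

lemma zmod_cos_ne (n : ℕ) (hn : 1 ≤ n) (a b : ZMod n) (hba : b ≠ a) (hba' : b ≠ -a) :
    Real.cos (2 * Real.pi * (b.val : ℝ) / n) ≠ Real.cos (2 * Real.pi * (a.val : ℝ) / n) := by
  haveI : NeZero n := ⟨by omega⟩
  intro h
  rw [Real.cos_eq_cos_iff] at h
  have hn0 : (n : ℝ) ≠ 0 := by positivity
  have h2pi : (2 : ℝ) * Real.pi ≠ 0 := by simpa using Real.pi_ne_zero
  obtain ⟨k, hk | hk⟩ := h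
  · have h3 : ((a.val : ℝ) - b.val) / n = k := by
      rw [sub_div]
      have : (a.val : ℝ) / n = k + (b.val : ℝ) / n := by
        apply mul_left_cancel₀ h2pi
        linear_combination hk
      linarith [this]
    rw [div_eq_iff hn0] at h3
    have hz : (a.val : ℤ) - b.val = k * n := by exact_mod_cast h3
    have hdvd : (n : ℤ) ∣ ((a.val : ℤ) - b.val) := ⟨k, by linarith⟩
    have h0 := (ZMod.intCast_zmod_eq_zero_iff_dvd ((a.val : ℤ) - b.val) n).2 hdvd
    push_cast [ZMod.natCast_val, ZMod.cast_id] at h0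
    exact hba (by linear_combination -h0)
  · have h3 : ((a.val : ℝ) + b.val) / n = k := by
      rw [add_div]
      have : (a.val : ℝ) / n = k - (b.val : ℝ) / n := by
        apply mul_left_cancel₀ h2pi
        linear_combination hk
      linarith [this]
    rw [div_eq_iff hn0] at h3
    have hz : (a.val : ℤ) + b.val = k * n := by exact_mod_cast h3
    have hdvd : (n : ℤ) ∣ ((a.val : ℤ) + b.val) := ⟨k, by linarith⟩
    have h0 := (ZMod.intCast_zmod_eq_zero_iff_dvd ((a.val : ℤ) + b.val) n).2 hdvd
    push_cast [ZMod.natCast_val, ZMod.cast_id] at h0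
    exact hba' (by linear_combination h0)

/-! ### Linear-algebra infrastructure -/

def plane (i j : Fin 4) : Submodule ℝ (Fin 4 → ℝ) where
  carrier := {x | x i = 0 ∧ x j = 0}
  add_mem' := by
    rintro x y ⟨hx1, hx2⟩ ⟨hy1, hy2⟩
    exact ⟨by simp [hx1, hy1], by simp [hx2, hy2]⟩
  zero_mem' := ⟨rfl, rfl⟩
  smul_mem' := by
    rintro c x ⟨hx1, hx2⟩
    exact ⟨by simp [hx1], by simp [hx2]⟩

lemma mem_plane {i j : Fin 4} {x : Fin 4 → ℝ} : x ∈ plane i j ↔ x i = 0 ∧ x j = 0 := Iff.rfl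

lemma span01_eq : Submodule.span ℝ {Pi.single 0 1, Pi.single 1 1} = plane 2 3 := by
  apply le_antisymm
  · rw [Submodule.span_le]
    rintro x (rfl | rfl) <;> exact ⟨by simp [Pi.single_apply], by simp [Pi.single_apply]⟩
  · rintro x ⟨h2, h3⟩
    have hx : x = x 0 • (Pi.single 0 1 : Fin 4 → ℝ) + x 1 • (Pi.single 1 1 : Fin 4 → ℝ) := by
      funext i
      fin_cases i <;> simp [Pi.single_apply, h2, h3]
    rw [hx]
    exact Submodule.add_mem _
      (Submodule.smul_mem _ _ (Submodule.subset_span (Or.inl rfl)))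
      (Submodule.smul_mem _ _ (Submodule.subset_span (Or.inr rfl)))

lemma span23_eq : Submodule.span ℝ {Pi.single 2 1, Pi.single 3 1} = plane 0 1 := by
  apply le_antisymm
  · rw [Submodule.span_le]
    rintro x (rfl | rfl) <;> exact ⟨by simp [Pi.single_apply], by simp [Pi.single_apply]⟩
  · rintro x ⟨h0, h1⟩
    have hx : x = x 2 • (Pi.single 2 1 : Fin 4 → ℝ) + x 3 • (Pi.single 3 1 : Fin 4 → ℝ) := by
      funext i
      fin_cases i <;> simp [Pi.single_apply, h0, h1]
    rw [hx]
    exact Submodule.add_mem _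
      (Submodule.smul_mem _ _ (Submodule.subset_span (Or.inl rfl)))
      (Submodule.smul_mem _ _ (Submodule.subset_span (Or.inr rfl)))

lemma li_pair {u v : Fin 4 → ℝ} (h : ∀ s t : ℝ, s • u + t • v = 0 → s = 0 ∧ t = 0) :
    Module.finrank ℝ (Submodule.span ℝ {u, v} : Submodule ℝ (Fin 4 → ℝ)) = 2 := by
  have hli : LinearIndependent ℝ ![u, v] := LinearIndependent.pair_iff.2 h
  have hrange : Set.range ![u, v] = {u, v} := by
    ext y
    simp [Fin.exists_fin_two, or_comm]
  have := finrank_span_eq_card hli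
  rw [hrange] at this
  simpa using this

lemma finrank_span01 :
    Module.finrank ℝ (Submodule.span ℝ {(Pi.single 0 1 : Fin 4 → ℝ), Pi.single 1 1}) = 2 := by
  apply li_pair
  intro s t hst
  constructor
  · have := congrFun hst 0
    simpa [Pi.single_apply] using this
  · have := congrFun hst 1
    simpa [Pi.single_apply] using this

lemma finrank_span23 :
    Module.finrank ℝ (Submodule.span ℝ {(Pi.single 2 1 : Fin 4 → ℝ), Pi.single 3 1}) = 2 := by
  apply li_pair
  intro s t hst
  constructor
  · have := congrFun hst 2
    simpa [Pi.single_apply] using this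
  · have := congrFun hst 3
    simpa [Pi.single_apply] using this

/-! ### The generic block-rotation matrix -/

def Mof (c1 s1 c2 s2 : ℝ) : Matrix (Fin 4) (Fin 4) ℝ :=
  !![c1, -s1, 0, 0; s1, c1, 0, 0; 0, 0, c2, -s2; 0, 0, s2, c2]

lemma Mof_mulVec (c1 s1 c2 s2 : ℝ) (x : Fin 4 → ℝ) :
    (Mof c1 s1 c2 s2).mulVec x =
      ![c1 * x 0 - s1 * x 1, s1 * x 0 + c1 * x 1,
        c2 * x 2 - s2 * x 3, s2 * x 2 + c2 * x 3] := by
  funext i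
  fin_cases i <;>
    simp [Mof, Matrix.mulVec, dotProduct, Fin.sum_univ_four] <;> ring

lemma Mof_mulVec' (c1 s1 c2 s2 a0 a1 a2 a3 : ℝ) :
    (Mof c1 s1 c2 s2).mulVec ![a0, a1, a2, a3] =
      ![c1 * a0 - s1 * a1, s1 * a0 + c1 * a1, c2 * a2 - s2 * a3, s2 * a2 + c2 * a3] := by
  rw [Mof_mulVec]
  simp

lemma key_identity (c1 s1 c2 s2 : ℝ) (h1 : c1 ^ 2 + s1 ^ 2 = 1) (h2 : c2 ^ 2 + s2 ^ 2 = 1)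
    (x : Fin 4 → ℝ) :
    (2 * (c1 - c2)) • (![x 0, x 1, 0, 0] : Fin 4 → ℝ) =
      (2 * c1) • x - (4 * c1 * c2 + 1) • (Mof c1 s1 c2 s2).mulVec x
        + (2 * c1 + 2 * c2) • (Mof c1 s1 c2 s2).mulVec ((Mof c1 s1 c2 s2).mulVec x)
        - (Mof c1 s1 c2 s2).mulVec ((Mof c1 s1 c2 s2).mulVec ((Mof c1 s1 c2 s2).mulVec x)) := by
  rw [Mof_mulVec c1 s1 c2 s2 x, Mof_mulVec', Mof_mulVec']
  have hsucc : (Fin.succ 2 : Fin 4) = 3 := rfl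
  funext i
  fin_cases i
  · simp [Matrix.vecHead, Matrix.vecTail, Function.comp, hsucc]
    linear_combination ((2*c2 - c1) * x 0 + s1 * x 1) * h1
  · simp [Matrix.vecHead, Matrix.vecTail, Function.comp, hsucc]
    linear_combination (-s1 * x 0 + (2*c2 - c1) * x 1) * h1
  · simp [Matrix.vecHead, Matrix.vecTail, Function.comp, hsucc]
    linear_combination ((2*c1 - c2) * x 2 + s2 * x 3) * h2
  · simp [Matrix.vecHead, Matrix.vecTail, Function.comp, hsucc]
    linear_combination (-s2 * x 2 + (2*c1 - c2) * x 3) * h2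

/-- The core classification, for a generic block-rotation matrix. -/
lemma main_core (c1 s1 c2 s2 : ℝ) (h1 : c1 ^ 2 + s1 ^ 2 = 1) (h2 : c2 ^ 2 + s2 ^ 2 = 1)
    (hs1 : s1 ≠ 0) (hcc : c2 ≠ c1) (X : Submodule ℝ (Fin 4 → ℝ))
    (hdim : Module.finrank ℝ X = 2) (hinv : ∀ x ∈ X, (Mof c1 s1 c2 s2).mulVec x ∈ X) :
    X = Submodule.span ℝ {Pi.single 0 1, Pi.single 1 1} ∨
      X = Submodule.span ℝ {Pi.single 2 1, Pi.single 3 1} := by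
  have hne : (2 * (c1 - c2) : ℝ) ≠ 0 := by
    intro h
    exact hcc (by linarith)
  have hp1 : ∀ x ∈ X, (![x 0, x 1, 0, 0] : Fin 4 → ℝ) ∈ X := by
    intro x hx
    have hy := hinv x hx
    have hz := hinv _ hy
    have hw := hinv _ hz
    have hmem : (2 * c1) • x - (4 * c1 * c2 + 1) • (Mof c1 s1 c2 s2).mulVec x
        + (2 * c1 + 2 * c2) • (Mof c1 s1 c2 s2).mulVec ((Mof c1 s1 c2 s2).mulVec x)
        - (Mof c1 s1 c2 s2).mulVec ((Mof c1 s1 c2 s2).mulVec ((Mof c1 s1 c2 s2).mulVec x)) ∈ X :=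
      sub_mem (add_mem (sub_mem (Submodule.smul_mem _ _ hx) (Submodule.smul_mem _ _ hy))
        (Submodule.smul_mem _ _ hz)) hw
    rw [← key_identity c1 s1 c2 s2 h1 h2 x] at hmem
    have hrw : (![x 0, x 1, 0, 0] : Fin 4 → ℝ)
        = (2 * (c1 - c2))⁻¹ • ((2 * (c1 - c2)) • (![x 0, x 1, 0, 0] : Fin 4 → ℝ)) := by
      rw [smul_smul, inv_mul_cancel₀ hne, one_smul]
    rw [hrw]
    exact Submodule.smul_mem _ _ hmem
  by_cases hall : ∀ x ∈ X, x 0 = 0 ∧ x 1 = 0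
  · right
    have hle : X ≤ Submodule.span ℝ {Pi.single 2 1, Pi.single 3 1} := by
      rw [span23_eq]
      intro x hx
      exact hall x hx
    exact Submodule.eq_of_le_of_finrank_eq hle (by rw [hdim, finrank_span23])
  · left
    push_neg at hall
    obtain ⟨x, hx, hx01⟩ := hall
    have hvX : (![x 0, x 1, 0, 0] : Fin 4 → ℝ) ∈ X := hp1 x hx
    have hWvX := hinv _ hvX
    have hWv' : (Mof c1 s1 c2 s2).mulVec (![x 0, x 1, 0, 0] : Fin 4 → ℝ)
        = ![c1 * x 0 - s1 * x 1, s1 * x 0 + c1 * x 1, 0, 0] := by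
      rw [Mof_mulVec']
      norm_num
    have hpos : 0 < x 0 ^ 2 + x 1 ^ 2 := by
      rcases eq_or_ne (x 0) 0 with h0 | h0
      · have h1' := hx01 h0
        have : (0 : ℝ) < x 1 ^ 2 :=
          lt_of_le_of_ne (sq_nonneg _) (Ne.symm (pow_ne_zero 2 h1'))
        nlinarith [sq_nonneg (x 0)]
      · have : (0 : ℝ) < x 0 ^ 2 :=
          lt_of_le_of_ne (sq_nonneg _) (Ne.symm (pow_ne_zero 2 h0))
        nlinarith [sq_nonneg (x 1)]
    have hrank : Module.finrank ℝ (Submodule.span ℝ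
        {(![x 0, x 1, 0, 0] : Fin 4 → ℝ),
          (Mof c1 s1 c2 s2).mulVec (![x 0, x 1, 0, 0] : Fin 4 → ℝ)} : Submodule ℝ (Fin 4 → ℝ)) = 2 := by
      apply li_pair
      intro s t hst
      rw [hWv'] at hst
      have e0 : s * x 0 + t * (c1 * x 0 - s1 * x 1) = 0 := by
        have := congrFun hst 0
        simpa using this
      have e1 : s * x 1 + t * (s1 * x 0 + c1 * x 1) = 0 := by
        have := congrFun hst 1
        simpa using this
      have ht' : t * (s1 * (x 0 ^ 2 + x 1 ^ 2)) = 0 := by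
        linear_combination x 0 * e1 - x 1 * e0
      have ht : t = 0 := by
        rcases mul_eq_zero.1 ht' with h | h
        · exact h
        · exact absurd h (mul_ne_zero hs1 (ne_of_gt hpos))
      subst ht
      refine ⟨?_, rfl⟩
      rcases eq_or_ne (x 0) 0 with h0 | h0
      · have h1' := hx01 h0
        have : s * x 1 = 0 := by linear_combination e1
        exact (mul_eq_zero.1 this).resolve_right h1'
      · have : s * x 0 = 0 := by linear_combination e0
        exact (mul_eq_zero.1 this).resolve_right h0
    have hle : Submodule.span ℝ
        {(![x 0, x 1, 0, 0] : Fin 4 → ℝ),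
          (Mof c1 s1 c2 s2).mulVec (![x 0, x 1, 0, 0] : Fin 4 → ℝ)} ≤ X := by
      rw [Submodule.span_le]
      rintro y (rfl | rfl)
      · exact hvX
      · exact hWvX
    have hXeq := Submodule.eq_of_le_of_finrank_eq hle (by rw [hdim, hrank])
    have hXle : X ≤ Submodule.span ℝ {Pi.single 0 1, Pi.single 1 1} := by
      rw [span01_eq, ← hXeq, Submodule.span_le]
      rintro y (rfl | rfl)
      · exact ⟨by simp, by simp⟩
      · rw [hWv']
        exact ⟨by simp, by simp⟩
    exact Submodule.eq_of_le_of_finrank_eq hXle (by rw [hdim, finrank_span01])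

theorem stmt_7 (n : ℕ) (hn : 1 ≤ n) (a b : ZMod n)
    (ha : 2 * a ≠ 0) (hb : 2 * b ≠ 0) (hba : b ≠ a) (hba' : b ≠ -a) :
    {X : Submodule ℝ (Fin 4 → ℝ) |
        Module.finrank ℝ X = 2 ∧ ∀ x ∈ X, (Wmat n a b).mulVec x ∈ X} =
      {Submodule.span ℝ {Pi.single 0 1, Pi.single 1 1},
       Submodule.span ℝ {Pi.single 2 1, Pi.single 3 1}} := by
  have hM : Wmat n a b = Mof (Real.cos (2 * Real.pi * a.val / n)) (Real.sin (2 * Real.pi * a.val / n))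
      (Real.cos (2 * Real.pi * b.val / n)) (Real.sin (2 * Real.pi * b.val / n)) := by
    ext i j
    fin_cases i <;> fin_cases j <;>
      simp [Wmat, rotMat, Mof, Matrix.fromBlocks, finSumFinEquiv, Fin.addCases] <;> rfl
  have h1 : Real.cos (2 * Real.pi * a.val / n) ^ 2 + Real.sin (2 * Real.pi * a.val / n) ^ 2 = 1 :=
    Real.cos_sq_add_sin_sq _
  have h2 : Real.cos (2 * Real.pi * b.val / n) ^ 2 + Real.sin (2 * Real.pi * b.val / n) ^ 2 = 1 :=
    Real.cos_sq_add_sin_sq _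
  have hs1 : Real.sin (2 * Real.pi * a.val / n) ≠ 0 := zmod_sin_ne n hn a ha
  have hcc : Real.cos (2 * Real.pi * b.val / n) ≠ Real.cos (2 * Real.pi * a.val / n) :=
    zmod_cos_ne n hn a b hba hba'
  ext X
  simp only [Set.mem_setOf_eq, Set.mem_insert_iff, Set.mem_singleton_iff]
  constructor
  · rintro ⟨hdim, hinv⟩
    rw [hM] at hinv
    exact main_core _ _ _ _ h1 h2 hs1 hcc X hdim hinv
  · rintro (rfl | rfl)
    · refine ⟨finrank_span01, ?_⟩
      intro x hx
      rw [span01_eq] at hx ⊢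
      obtain ⟨hx2, hx3⟩ := hx
      rw [hM, Mof_mulVec]
      exact ⟨by simp [hx2, hx3], by simp [hx2, hx3]⟩
    · refine ⟨finrank_span23, ?_⟩
      intro x hx
      rw [span23_eq] at hx ⊢
      obtain ⟨hx0, hx1⟩ := hx
      rw [hM, Mof_mulVec]
      exact ⟨by simp [hx0, hx1], by simp [hx0, hx1]⟩
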